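/- The Laplacian of the star semigraph S³_{2,n} has eigenvalue 1/2 with multiplicity exactly n−1, eigenvalue 0 with multiplicity 1, and three further eigenvalues which are the roots of λ³ − ((n+17)/2)λ² + (19 + 3n)λ − (5n+15)/2. -/

import Mathlib

open Matrix Polynomial BigOperators

/-!
Listing the vertices as the hub `v₁, v₂, v₃` followed by the `n` leaves, `starLap n` has block
form `[[A, B], [Bᵀ, ½ I]]`, and `B Bᵀ` has the single nonzero entry `n/4`. For `x ≠ ½` the Schur
complement gives `det (x I - L) = (x - ½)ⁿ det (x I - A - (x - ½)⁻¹ B Bᵀ)`, and expanding the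
`3 × 3` determinant yields `charpoly L = (X - ½)ⁿ⁻¹ · X · p` with `p` the cubic of the statement.
Since `p 0 = -(5n + 15)/2` and `p ½ = -9n/8` are nonzero, the multiplicities can be read off.
-/

/-- The Laplacian of the star semigraph `S³_{2,n}` on `n+3` vertices: one size-3 full
edge `(v₂, v₁, v₃)` with middle vertex `v₁` (index 0), and `n` half edges `(v₁, v_k)`,
`k = 4, …, n+3`, in which `v₁` is a middle end vertex. -/
noncomputable def starLap (n : ℕ) : Matrix (Fin (n + 3)) (Fin (n + 3)) ℝ :=
  fun i j =>
    if (i : ℕ) = 0 then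
      (if (j : ℕ) = 0 then ((n : ℝ) + 4) / 2 else if (j : ℕ) ≤ 2 then -1 else -(1/2))
    else if (i : ℕ) ≤ 2 then
      (if (j : ℕ) = 0 then -1 else if j = i then 3 else if (j : ℕ) ≤ 2 then -2 else 0)
    else
      (if (j : ℕ) = 0 then -(1/2) else if j = i then 1/2 else 0)

theorem eval_charpoly_fromBlocks_scalar {m n R : Type*} [Fintype m] [Fintype n] [DecidableEq m]
    [DecidableEq n] [Field R] (A : Matrix m m R) (B : Matrix m n R) (C : Matrix n m R)
    {c x : R} (hx : x ≠ c) :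
    (fromBlocks A B C (scalar n c)).charpoly.eval x =
      (x - c) ^ Fintype.card n * (scalar m x - A - (x - c)⁻¹ • (B * C)).det := by
  have hblocks : scalar (m ⊕ n) x - fromBlocks A B C (scalar n c) =
      fromBlocks (scalar m x - A) (-B) (-C) (scalar n (x - c)) := by
    ext (i | i) (j | j) <;> simp [diagonal_apply, ite_sub_ite]
  have := invertibleOfNonzero (sub_ne_zero.mpr hx)
  have := Invertible.map (scalar n) (x - c)
  have hschur : -B * ⅟(scalar n (x - c)) * -C = (x - c)⁻¹ • (B * C) := by
    rw [← map_invOf, invOf_eq_inv, scalar_apply, ← smul_one_eq_diagonal]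
    simp
  rw [eval_charpoly, hblocks, det_fromBlocks₂₂, hschur, scalar_apply, det_diagonal,
    Finset.prod_const, Finset.card_univ]

theorem rootMultiplicity_X_sub_C_pow_mul {R : Type*} [CommRing R] {a : R}
    {q : R[X]} (k : ℕ) (hq : ¬ q.IsRoot a) : ((X - C a) ^ k * q).rootMultiplicity a = k := by
  rw [mul_comm, rootMultiplicity_mul_X_sub_C_pow (fun h => hq (by simp [h])),
    rootMultiplicity_eq_zero hq, zero_add]

noncomputable def starHub (n : ℕ) : Matrix (Fin 3) (Fin 3) ℝ :=
  !![((n : ℝ) + 4) / 2, -1, -1; -1, 3, -2; -1, -2, 3]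

noncomputable def starSpokes (n : ℕ) : Matrix (Fin 3) (Fin n) ℝ :=
  of fun i _ => if i = 0 then -(1 / 2) else 0

def hubSpokesEquiv (n : ℕ) : Fin 3 ⊕ Fin n ≃ Fin (n + 3) :=
  finSumFinEquiv.trans (finCongr (Nat.add_comm 3 n))

theorem starLap_submatrix_hubSpokesEquiv (n : ℕ) :
    (starLap n).submatrix (hubSpokesEquiv n) (hubSpokesEquiv n) =
      fromBlocks (starHub n) (starSpokes n) (starSpokes n)ᵀ (scalar (Fin n) (1 / 2)) := by
  ext (i | k) (j | l)
  · fin_cases i <;> fin_cases j <;> simp [starLap, starHub, hubSpokesEquiv]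
  · fin_cases i <;> simp [starLap, starSpokes, hubSpokesEquiv] <;> simp [Fin.ext_iff]
  · fin_cases j <;> simp [starLap, starSpokes, hubSpokesEquiv] <;> simp [Fin.ext_iff]
  · simp [starLap, hubSpokesEquiv, Fin.ext_iff, diagonal_apply, eq_comm]

noncomputable def starCubic (n : ℕ) : ℝ[X] :=
  X ^ 3 - C (((n : ℝ) + 17) / 2) * X ^ 2 + C (19 + 3 * (n : ℝ)) * X - C ((5 * (n : ℝ) + 15) / 2)

theorem eval_starCubic (n : ℕ) (x : ℝ) :
    (starCubic n).eval x =
      x ^ 3 - ((n : ℝ) + 17) / 2 * x ^ 2 + (19 + 3 * (n : ℝ)) * x - (5 * (n : ℝ) + 15) / 2 := by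
  simp [starCubic]

theorem starSpokes_mul_transpose (n : ℕ) :
    starSpokes n * (starSpokes n)ᵀ = !![(n : ℝ) / 4, 0, 0; 0, 0, 0; 0, 0, 0] := by
  ext i j
  fin_cases i <;> fin_cases j <;> simp [starSpokes, mul_apply]
  ring

theorem det_starHub_schur (n : ℕ) {x : ℝ} (hx : x ≠ 1 / 2) :
    (x - 1 / 2) *
        (scalar (Fin 3) x - starHub n - (x - 1 / 2)⁻¹ • (starSpokes n * (starSpokes n)ᵀ)).det =
      x * (starCubic n).eval x := by
  have hschur : scalar (Fin 3) x - starHub n - (x - 1 / 2)⁻¹ • (starSpokes n * (starSpokes n)ᵀ) =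
      !![x - ((n : ℝ) + 4) / 2 - (x - 1 / 2)⁻¹ * (n / 4), 1, 1; 1, x - 3, 2; 1, 2, x - 3] := by
    rw [starSpokes_mul_transpose]
    ext i j
    fin_cases i <;> fin_cases j <;> simp [starHub]
  rw [hschur, det_fin_three, eval_starCubic]
  simp only [of_apply, cons_val', cons_val_zero, cons_val_fin_one, cons_val_one, cons_val]
  linear_combination (-(n : ℝ) / 4 * ((x - 3) ^ 2 - 4)) * mul_inv_cancel₀ (sub_ne_zero.mpr hx)

theorem charpoly_starLap_mul_X_sub_C (n : ℕ) :
    (starLap n).charpoly * (X - C (1 / 2)) = (X - C (1 / 2)) ^ n * (X * starCubic n) := by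
  have hblocks : (starLap n).charpoly =
      (fromBlocks (starHub n) (starSpokes n) (starSpokes n)ᵀ (scalar (Fin n) (1 / 2))).charpoly := by
    rw [← starLap_submatrix_hubSpokesEquiv, ← charpoly_reindex (hubSpokesEquiv n).symm]
    rfl
  refine Polynomial.funext fun x => ?_
  rcases eq_or_ne x (1 / 2) with rfl | hx
  · -- for `n = 0` the right side vanishes because `starCubic 0` has the root `½`
    rcases n with _ | n <;> norm_num [eval_starCubic]
  · rw [eval_mul, hblocks, eval_charpoly_fromBlocks_scalar _ _ _ hx, Fintype.card_fin]
    simp only [eval_mul, eval_pow, eval_sub, eval_X, eval_C, ← det_starHub_schur n hx]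
    ring

theorem charpoly_starLap (n : ℕ) (hn : 1 ≤ n) :
    (starLap n).charpoly = (X - C (1 / 2)) ^ (n - 1) * (X * starCubic n) := by
  apply mul_right_cancel₀ (X_sub_C_ne_zero (1 / 2 : ℝ))
  rw [charpoly_starLap_mul_X_sub_C, mul_right_comm, ← pow_succ, Nat.sub_add_cancel hn]

/-- The Laplacian of the star semigraph `S³_{2,n}` has eigenvalue `1/2`
with (algebraic) multiplicity exactly `n - 1`, eigenvalue `0` with multiplicity `1`,
and the three remaining eigenvalues are the roots of
`λ³ - ((n+17)/2) λ² + (19 + 3n) λ - (5n+15)/2`. -/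
theorem stmt13 (n : ℕ) (hn : 1 ≤ n) :
    ((starLap n).charpoly.rootMultiplicity ((1 : ℝ)/2) = n - 1) ∧
    ((starLap n).charpoly.rootMultiplicity 0 = 1) ∧
    (∀ μ : ℝ, μ^3 - ((n : ℝ) + 17)/2 * μ^2 + (19 + 3*(n : ℝ)) * μ - (5*(n : ℝ) + 15)/2 = 0 →
      (starLap n).charpoly.IsRoot μ) := by
  have hcharpoly := charpoly_starLap n hn
  have hcubic_half : (starCubic n).eval (1 / 2) = -(9 * n / 8) := by rw [eval_starCubic]; ring
  have hcubic_zero : (starCubic n).eval 0 = -((5 * n + 15) / 2) := by rw [eval_starCubic]; ring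
  refine ⟨?_, ?_, fun μ hμ => ?_⟩
  · rw [hcharpoly, rootMultiplicity_X_sub_C_pow_mul]
    simp only [IsRoot, eval_mul, eval_X, hcubic_half]
    exact mul_ne_zero (by norm_num) (neg_ne_zero.mpr (by simp; omega))
  · rw [hcharpoly, show (X - C (1 / 2)) ^ (n - 1) * (X * starCubic n) =
        (X - C 0) ^ 1 * ((X - C (1 / 2)) ^ (n - 1) * starCubic n) by rw [C_0, sub_zero, pow_one]; ring,
      rootMultiplicity_X_sub_C_pow_mul]
    simp only [IsRoot, eval_mul, eval_pow, eval_sub, eval_X, eval_C, hcubic_zero]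
    exact mul_ne_zero (pow_ne_zero _ (by norm_num)) (neg_ne_zero.mpr (by positivity))
  · simp [hcharpoly, eval_starCubic, hμ]
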